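/- arXiv:math/9905083 — 3 statements merged into one kernel-verified Lean document; each statement's English description precedes it below -/
import Mathlib

section
/- For all nonnegative integers n and l, f^S_{n,2l+1} = f^S_{n,2l} and f^u_{n,2l+1} = f^u_{n,2l}; i.e. for the symmetry classes S and u, the number of such symmetric permutations with longest increasing subsequence of length at most 2l+1 is the same as the number with longest increasing subsequence of length at most 2l. -/
/-!
Under `π = ι∘π⁻¹∘ι`, reflection in the antidiagonal, `(x, y) ↦ (ι y, ι x)`, maps the graph of
`π` to itself and maps increasing subsequences to increasing subsequences. The points of an
increasing subsequence lying strictly below the antidiagonal, together with their mirror images,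
form an increasing subsequence of twice their number. As no point of the graph lies on the
antidiagonal, an increasing subsequence of length `2l+1` has at least `l+1` points strictly on
one side of it, and after reflecting we may take that side to be the lower one; this produces an
increasing subsequence of length `2l+2`. Hence `L(π)` is even.
-/

noncomputable section

/-- `lisLE π l` means the longest increasing subsequence of the permutation `π`
has length at most `l`. -/
def lisLE {N : ℕ} (π : Equiv.Perm (Fin N)) (l : ℕ) : Prop :=
  ∀ (k : ℕ) (f : Fin k → Fin N), StrictMono f → StrictMono (fun i => π (f i)) → k ≤ l

/-- `f^S_{n,l}`: the number of permutations `π` of `{1,…,2n}` with `π = ι∘π⁻¹∘ι`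
and `π(x) ≠ ι(x)` for all `x` (where `ι(x) = 2n+1-x`), whose longest increasing
subsequence has length at most `l`. -/
def fSCount (n l : ℕ) : ℕ :=
  Nat.card {π : Equiv.Perm (Fin (2 * n)) //
    π = Fin.revPerm * π⁻¹ * Fin.revPerm ∧ (∀ x, π x ≠ Fin.revPerm x) ∧ lisLE π l}

/-- `f^u_{n,l}`: the number of permutations `π` of `{1,…,4n}` with `π = π⁻¹`,
`π = ι∘π⁻¹∘ι` (where `ι(x) = 4n+1-x`), `π(x) ≠ x` and `π(x) ≠ ι(x)` for all `x`,
whose longest increasing subsequence has length at most `l`. -/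
def fuCount (n l : ℕ) : ℕ :=
  Nat.card {π : Equiv.Perm (Fin (4 * n)) //
    π = π⁻¹ ∧ π = Fin.revPerm * π⁻¹ * Fin.revPerm ∧
    (∀ x, π x ≠ x) ∧ (∀ x, π x ≠ Fin.revPerm x) ∧ lisLE π l}

theorem StrictMonoOn.union_of_forall_lt {α β : Type*} [Preorder α] [Preorder β] {f : α → β}
    {s t : Set α} (hs : StrictMonoOn f s) (ht : StrictMonoOn f t)
    (hst : ∀ a ∈ s, ∀ b ∈ t, a < b ∧ f a < f b) : StrictMonoOn f (s ∪ t) := by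
  rintro a (ha | ha) b (hb | hb) hab
  · exact hs ha hb hab
  · exact (hst a ha b hb).2
  · exact absurd hab (hst b hb a ha).1.asymm
  · exact ht ha hb hab

section

variable {N : ℕ} {π : Equiv.Perm (Fin N)}

theorem lisLE_iff_forall_card_le {l : ℕ} :
    lisLE π l ↔ ∀ s : Finset (Fin N), StrictMonoOn π s → s.card ≤ l := by
  constructor
  · intro h s hs
    let f := s.orderEmbOfFin rfl
    exact h _ f f.strictMono fun i j hij =>
      hs (s.orderEmbOfFin_mem rfl i) (s.orderEmbOfFin_mem rfl j) (f.strictMono hij)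
  · intro h k f hf hπf
    have hs : StrictMonoOn π (Finset.univ.image f : Finset (Fin N)) := by
      rintro _ hx _ hy hxy
      simp only [Finset.coe_image, Finset.coe_univ, Set.image_univ, Set.mem_range] at hx hy
      obtain ⟨i, rfl⟩ := hx
      obtain ⟨j, rfl⟩ := hy
      exact hπf (hf.lt_iff_lt.mp hxy)
    simpa [Finset.card_image_of_injective _ hf.injective] using h _ hs

theorem apply_rev_apply (hsym : π = Fin.revPerm * π⁻¹ * Fin.revPerm) (x : Fin N) :
    π (π x).rev = x.rev := by
  simpa [Equiv.Perm.mul_apply] using DFunLike.congr_fun hsym (π x).rev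

theorem rev_apply_rev_apply (hsym : π = Fin.revPerm * π⁻¹ * Fin.revPerm) (x : Fin N) :
    (π (π x).rev).rev = x := by
  rw [apply_rev_apply hsym, Fin.rev_rev]

theorem StrictMonoOn.image_rev_apply (hsym : π = Fin.revPerm * π⁻¹ * Fin.revPerm)
    {s : Set (Fin N)} (hs : StrictMonoOn π s) :
    StrictMonoOn π ((fun x => (π x).rev) '' s) := by
  rintro _ ⟨x, hx, rfl⟩ _ ⟨y, hy, rfl⟩ hxy
  simp only [apply_rev_apply hsym, Fin.rev_lt_rev] at hxy ⊢
  exact (hs.lt_iff_lt hy hx).mp hxy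

theorem StrictMonoOn.lt_rev_apply {s : Set (Fin N)} (hs : StrictMonoOn π s)
    (hbelow : ∀ x ∈ s, x < (π x).rev) {x y : Fin N} (hx : x ∈ s) (hy : y ∈ s) :
    x < (π y).rev := by
  rcases le_or_gt x y with hxy | hyx
  · exact hxy.trans_lt (hbelow y hy)
  · exact (hbelow x hx).trans (Fin.rev_lt_rev.mpr (hs hy hx hyx))

theorem StrictMonoOn.union_image_rev_apply (hsym : π = Fin.revPerm * π⁻¹ * Fin.revPerm)
    {s : Set (Fin N)} (hs : StrictMonoOn π s) (hbelow : ∀ x ∈ s, x < (π x).rev) :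
    StrictMonoOn π (s ∪ (fun x => (π x).rev) '' s) := by
  refine hs.union_of_forall_lt (hs.image_rev_apply hsym) ?_
  rintro a ha _ ⟨y, hy, rfl⟩
  rw [apply_rev_apply hsym]
  exact ⟨hs.lt_rev_apply hbelow ha hy, Fin.lt_rev_iff.mp (hs.lt_rev_apply hbelow hy ha)⟩

theorem two_mul_card_le_of_lisLE (hsym : π = Fin.revPerm * π⁻¹ * Fin.revPerm) {m : ℕ}
    (hm : lisLE π m) {s : Finset (Fin N)} (hs : StrictMonoOn π s)
    (hbelow : ∀ x ∈ s, x < (π x).rev) : 2 * s.card ≤ m := by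
  have hinj : Function.Injective fun x => (π x).rev := Fin.rev_injective.comp π.injective
  have hdisj : Disjoint s (s.image fun x => (π x).rev) := by
    rw [Finset.disjoint_left]
    rintro x hx hx'
    obtain ⟨y, hy, rfl⟩ := Finset.mem_image.mp hx'
    exact lt_irrefl _ (hs.lt_rev_apply hbelow hx hy)
  have hchain := hs.union_image_rev_apply hsym hbelow
  rw [← Finset.coe_image, ← Finset.coe_union] at hchain
  have := lisLE_iff_forall_card_le.mp hm _ hchain
  rwa [Finset.card_union_of_disjoint hdisj, Finset.card_image_of_injective _ hinj, ← two_mul]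
    at this

theorem lisLE_two_mul_add_one_iff (hsym : π = Fin.revPerm * π⁻¹ * Fin.revPerm)
    (hfp : ∀ x, π x ≠ Fin.revPerm x) {l : ℕ} :
    lisLE π (2 * l + 1) ↔ lisLE π (2 * l) := by
  refine ⟨fun h => lisLE_iff_forall_card_le.mpr fun s hs => ?_,
    fun h k f hf hπf => (h k f hf hπf).trans (Nat.le_succ _)⟩
  set below := s.filter fun x => x < (π x).rev
  set above := s.filter fun x => ¬x < (π x).rev
  have hbelow : 2 * below.card ≤ 2 * l + 1 :=
    two_mul_card_le_of_lisLE hsym h (hs.mono (Finset.coe_subset.mpr (Finset.filter_subset _ _)))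
      fun x hx => (Finset.mem_filter.mp hx).2
  have habove : 2 * (above.image fun x => (π x).rev).card ≤ 2 * l + 1 := by
    refine two_mul_card_le_of_lisLE hsym h ?_ ?_
    · rw [Finset.coe_image]
      exact (hs.mono (Finset.coe_subset.mpr (Finset.filter_subset _ _))).image_rev_apply hsym
    simp only [Finset.mem_image, Finset.mem_filter, above]
    rintro _ ⟨x, ⟨-, hx⟩, rfl⟩
    rw [rev_apply_rev_apply hsym]
    exact lt_of_le_of_ne (not_lt.mp hx) fun heq => hfp x (Fin.rev_eq_iff.mp heq)
  have hinj : Function.Injective fun x => (π x).rev := Fin.rev_injective.comp π.injective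
  rw [Finset.card_image_of_injective _ hinj] at habove
  have hsplit : below.card + above.card = s.card := Finset.card_filter_add_card_filter_not _
  omega

end

/-- `f^S_{n,2l+1} = f^S_{n,2l}` and `f^u_{n,2l+1} = f^u_{n,2l}`. -/
theorem fS_fu_odd_eq_even (n l : ℕ) :
    fSCount n (2 * l + 1) = fSCount n (2 * l) ∧
    fuCount n (2 * l + 1) = fuCount n (2 * l) := by
  refine ⟨Nat.card_congr (Equiv.subtypeEquivRight fun π => ?_),
    Nat.card_congr (Equiv.subtypeEquivRight fun π => ?_)⟩
  · exact and_congr_right fun hsym => and_congr_right fun hfp =>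
      lisLE_two_mul_add_one_iff hsym hfp
  · exact and_congr_right fun _ => and_congr_right fun hsym => and_congr_right fun _ =>
      and_congr_right fun hfp => lisLE_two_mul_add_one_iff hsym hfp
end
end

section
/- For every nonnegative integer l and all real t and β ≥ 0, e^{−βt−t²/2} · Σ_{n≥0} (t^n/n!) · Σ_{m=0}^{n} β^m · g^S_{n,m,2l+1} = e^{−t²/2} · Σ_{n≥0} (t^n/n!) · g^S_{n,0,2l}; equivalently, the generalized Poisson generating function P^S_{2l+1}(t;β) equals P^S_{2l}(t;0). -/
noncomputable section

/-- `g^S_{n,m,l}`: the number of permutations `π` of `{1,…,n}` with `π = ι∘π⁻¹∘ι`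
(where `ι(x) = n+1-x`), exactly `m` points `x` with `π(x) = ι(x)`, and longest
increasing subsequence of length at most `l`. -/
def gSCount (n m l : ℕ) : ℕ :=
  Nat.card {π : Equiv.Perm (Fin n) //
    π = Fin.revPerm * π⁻¹ * Fin.revPerm ∧
    (Finset.univ.filter fun x => π x = Fin.revPerm x).card = m ∧ lisLE π l}

namespace PSaux

open Finset

variable {N : ℕ}

/-- `S` is (the index set of) a decreasing subsequence for `τ`. -/
def DecOn (τ : Fin N → Fin N) (S : Finset (Fin N)) : Prop :=
  ∀ x ∈ S, ∀ y ∈ S, x < y → τ y < τ x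

def DecBound (τ : Fin N → Fin N) (l : ℕ) : Prop :=
  ∀ S : Finset (Fin N), DecOn τ S → S.card ≤ l

lemma lisLE_iff (π : Equiv.Perm (Fin N)) (l : ℕ) :
    lisLE π l ↔ DecBound (fun x => (π x).rev) l := by
  constructor
  · intro h S hS
    refine h S.card (S.orderEmbOfFin rfl) (S.orderEmbOfFin rfl).strictMono ?_
    intro i j hij
    have h1 : S.orderEmbOfFin rfl i < S.orderEmbOfFin rfl j :=
      (S.orderEmbOfFin rfl).strictMono hij
    have := hS _ (S.orderEmbOfFin_mem rfl i) _ (S.orderEmbOfFin_mem rfl j) h1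
    simpa using Fin.rev_lt_rev.mp this
  · intro h k f hf hπf
    have hcard : (Finset.univ.image f).card = k := by
      rw [Finset.card_image_of_injective _ hf.injective, Finset.card_univ, Fintype.card_fin]
    rw [← hcard]
    refine h _ ?_
    rintro x hx y hy hxy
    obtain ⟨i, -, rfl⟩ := Finset.mem_image.mp hx
    obtain ⟨j, -, rfl⟩ := Finset.mem_image.mp hy
    have hij : i < j := by
      rcases lt_trichotomy i j with h' | rfl | h'
      · exact h'
      · exact absurd hxy (lt_irrefl _)
      · exact absurd (hf h') (not_lt_of_gt hxy)
    exact Fin.rev_lt_rev.mpr (hπf hij)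

lemma rev_mul_self : (Fin.revPerm : Equiv.Perm (Fin N)) * Fin.revPerm = 1 := by
  ext x; simp

lemma rev_eq_comm {a b : Fin N} : a.rev = b ↔ a = b.rev :=
  ⟨fun h => by rw [← h, Fin.rev_rev], fun h => by rw [h, Fin.rev_rev]⟩

lemma cond_iff (π : Equiv.Perm (Fin N)) :
    π = Fin.revPerm * π⁻¹ * Fin.revPerm ↔
      Function.Involutive ⇑(Fin.revPerm * π : Equiv.Perm (Fin N)) := by
  have key : Function.Involutive ⇑(Fin.revPerm * π : Equiv.Perm (Fin N)) ↔
      (Fin.revPerm * π) * (Fin.revPerm * π) = 1 := by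
    constructor
    · intro h
      refine Equiv.ext fun x => ?_
      simp only [Equiv.Perm.mul_apply, Equiv.Perm.one_apply]
      exact h x
    · intro h x; simpa using Equiv.ext_iff.mp h x
  rw [key]
  constructor
  · intro h
    have h1 : Fin.revPerm * π = π⁻¹ * Fin.revPerm := by
      conv_lhs => rw [h]
      rw [← mul_assoc, ← mul_assoc, rev_mul_self, one_mul]
    calc Fin.revPerm * π * (Fin.revPerm * π)
        = π⁻¹ * Fin.revPerm * (π⁻¹ * Fin.revPerm) := by rw [h1]
      _ = π⁻¹ * (Fin.revPerm * π⁻¹ * Fin.revPerm) := by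
            simp only [mul_assoc]
      _ = π⁻¹ * π := by rw [← h]
      _ = 1 := inv_mul_cancel π
  · intro h
    have h1 : Fin.revPerm * π = (Fin.revPerm * π)⁻¹ := by
      rw [eq_inv_iff_mul_eq_one]; exact h
    have h2 : (Fin.revPerm : Equiv.Perm (Fin N))⁻¹ = Fin.revPerm := by
      rw [eq_comm, eq_inv_iff_mul_eq_one]; exact rev_mul_self
    rw [mul_inv_rev, h2] at h1
    calc π = Fin.revPerm * (Fin.revPerm * π) := by
            rw [← mul_assoc, rev_mul_self, one_mul]
      _ = Fin.revPerm * (π⁻¹ * Fin.revPerm) := by rw [h1]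
      _ = Fin.revPerm * π⁻¹ * Fin.revPerm := by rw [mul_assoc]

lemma fix_iff (π : Equiv.Perm (Fin N)) (x : Fin N) :
    π x = Fin.revPerm x ↔ (Fin.revPerm * π : Equiv.Perm (Fin N)) x = x := by
  simp only [Equiv.Perm.mul_apply, Fin.revPerm_apply]
  exact rev_eq_comm.symm

/-- `gSCount` in terms of involutions: `σ = rev ∘ π`. -/
lemma gSCount_eq_invCount (n m l : ℕ) :
    gSCount n m l = Nat.card {σ : Equiv.Perm (Fin n) //
      Function.Involutive ⇑σ ∧ (Finset.univ.filter fun x => σ x = x).card = m ∧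
      DecBound ⇑σ l} := by
  unfold gSCount
  refine Nat.card_congr (Equiv.subtypeEquiv (Equiv.mulLeft (Fin.revPerm : Equiv.Perm (Fin n))) ?_)
  intro π
  simp only [Equiv.coe_mulLeft]
  constructor
  · rintro ⟨h1, h2, h3⟩
    refine ⟨(cond_iff π).mp h1, ?_, ?_⟩
    · rw [← h2]; congr 1; ext x
      simp only [Finset.mem_filter, Finset.mem_univ, true_and, Equiv.Perm.mul_apply,
        Fin.revPerm_apply]
      first | exact rev_eq_comm | exact rev_eq_comm.symm
    · intro S hS
      exact (lisLE_iff π l).mp h3 S (by intro x hx y hy hxy; exact hS x hx y hy hxy)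
  · rintro ⟨h1, h2, h3⟩
    refine ⟨(cond_iff π).mpr h1, ?_, ?_⟩
    · rw [← h2]; congr 1; ext x
      simp only [Finset.mem_filter, Finset.mem_univ, true_and, Equiv.Perm.mul_apply,
        Fin.revPerm_apply]
      first | exact rev_eq_comm | exact rev_eq_comm.symm
    · rw [lisLE_iff]
      intro S hS
      exact h3 S (by intro x hx y hy hxy; exact hS x hx y hy hxy)


/-- A finset invariant under a fixed-point-free involution has even cardinality. -/
lemma even_card_of_invariant (f : Fin N → Fin N) (hf : Function.Involutive f)
    (hfpf : ∀ x, f x ≠ x) :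
    ∀ C : Finset (Fin N), (∀ z ∈ C, f z ∈ C) → Even C.card := by
  intro C
  induction C using Finset.strongInduction with
  | _ C ih =>
    intro hinv
    rcases C.eq_empty_or_nonempty with rfl | ⟨x, hx⟩
    · simp
    · have hfx : f x ∈ C := hinv x hx
      have hxfx : x ≠ f x := fun h => hfpf x h.symm
      set C' : Finset (Fin N) := C \ {x, f x} with hC'
      have hsub : {x, f x} ⊆ C := by
        intro z hz
        rcases Finset.mem_insert.mp hz with rfl | hz
        · exact hx
        · rcases Finset.mem_singleton.mp hz with rfl; exact hfx
      have hss : C' ⊂ C := by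
        refine Finset.sdiff_ssubset hsub ?_
        exact ⟨x, Finset.mem_insert_self _ _⟩
      have hinv' : ∀ z ∈ C', f z ∈ C' := by
        intro z hz
        rcases Finset.mem_sdiff.mp hz with ⟨hzC, hznot⟩
        simp only [Finset.mem_insert, Finset.mem_singleton, not_or] at hznot
        refine Finset.mem_sdiff.mpr ⟨hinv z hzC, ?_⟩
        simp only [Finset.mem_insert, Finset.mem_singleton, not_or]
        constructor
        · intro h; exact hznot.2 (by rw [← h, hf z])
        · intro h; exact hznot.1 (hf.injective h)
      have heven := ih C' hss hinv'
      have hcard : C'.card + 2 = C.card := by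
        rw [hC', Finset.card_sdiff_of_subset hsub, Finset.card_pair hxfx]
        have : 2 ≤ C.card := by
          calc 2 = ({x, f x} : Finset (Fin N)).card := (Finset.card_pair hxfx).symm
            _ ≤ C.card := Finset.card_le_card hsub
        omega
      rw [← hcard]
      exact heven.add (even_two)

/-- Any decreasing set for a fixed-point-free involution can be improved to one of
even cardinality at least as large. -/
lemma exists_even_dec (τ : Equiv.Perm (Fin N)) (hinv : Function.Involutive ⇑τ)
    (hfpf : ∀ x, τ x ≠ x) (S : Finset (Fin N)) (hS : DecOn ⇑τ S) :
    ∃ T : Finset (Fin N), DecOn ⇑τ T ∧ Even T.card ∧ S.card ≤ T.card := by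
  classical
  -- a maximum-cardinality decreasing set
  set 𝒟 : Finset (Finset (Fin N)) := Finset.univ.filter (fun A => DecOn ⇑τ A) with h𝒟
  have hne : 𝒟.Nonempty := ⟨S, by simp [h𝒟, hS]⟩
  obtain ⟨A, hA𝒟, hAmax⟩ := Finset.exists_max_image 𝒟 Finset.card hne
  have hAdec : DecOn ⇑τ A := (Finset.mem_filter.mp hA𝒟).2
  have hmax : ∀ B : Finset (Fin N), DecOn ⇑τ B → B.card ≤ A.card := by
    intro B hB
    exact hAmax B (by simp [h𝒟, hB])
  -- helper : in a decreasing set, ⊑-comparable elements are equal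
  have dec_pair : ∀ {X : Finset (Fin N)}, DecOn ⇑τ X → ∀ {u v : Fin N}, u ∈ X → v ∈ X →
      u ≤ v → τ u ≤ τ v → u = v := by
    intro X hX u v hu hv huv hτuv
    rcases eq_or_lt_of_le huv with rfl | h
    · rfl
    · exact absurd (hX u hu v hv h) (not_lt_of_ge hτuv)
  set A' : Finset (Fin N) := A.image ⇑τ with hA'
  have hA'dec : DecOn ⇑τ A' := by
    rintro x hx y hy hxy
    obtain ⟨a, ha, rfl⟩ := Finset.mem_image.mp hx
    obtain ⟨b, hb, rfl⟩ := Finset.mem_image.mp hy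
    rw [hinv a, hinv b]
    -- hxy : τ a < τ b ; want b < a
    rcases lt_trichotomy a b with h | rfl | h
    · exact absurd (hAdec a ha b hb h) (not_lt_of_gt hxy)
    · exact absurd hxy (lt_irrefl _)
    · exact h
  have hUinv : ∀ w ∈ A ∪ A', τ w ∈ A ∪ A' := by
    intro w hw
    rcases Finset.mem_union.mp hw with hw | hw
    · exact Finset.mem_union_right _ (Finset.mem_image_of_mem _ hw)
    · obtain ⟨a, ha, rfl⟩ := Finset.mem_image.mp hw
      rw [hinv a]
      exact Finset.mem_union_left _ ha
  set C : Finset (Fin N) :=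
    (A ∪ A').filter (fun z => ∀ w ∈ A ∪ A', w ≤ z → τ w ≤ τ z → w = z) with hC
  set D : Finset (Fin N) :=
    (A ∪ A').filter (fun z => ∀ w ∈ A ∪ A', z ≤ w → τ z ≤ τ w → w = z) with hD
  have hCdec : DecOn ⇑τ C := by
    intro x hx y hy hxy
    by_contra hcon
    push_neg at hcon
    have hyC := Finset.mem_filter.mp hy
    have := hyC.2 x (Finset.mem_filter.mp hx).1 (le_of_lt hxy) hcon
    exact absurd this (ne_of_lt hxy)
  have hDdec : DecOn ⇑τ D := by
    intro x hx y hy hxy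
    by_contra hcon
    push_neg at hcon
    have hxD := Finset.mem_filter.mp hx
    have := hxD.2 y (Finset.mem_filter.mp hy).1 (le_of_lt hxy) hcon
    exact absurd this.symm (ne_of_lt hxy)
  -- A ∪ A' ⊆ C ∪ D
  have hunion : A ∪ A' ⊆ C ∪ D := by
    intro z hz
    by_contra hcon
    simp only [Finset.mem_union, not_or] at hcon
    obtain ⟨hzC, hzD⟩ := hcon
    have h1 : ∃ w ∈ A ∪ A', w ≤ z ∧ τ w ≤ τ z ∧ w ≠ z := by
      by_contra h
      push_neg at h
      exact hzC (Finset.mem_filter.mpr ⟨hz, fun w hw hle hτle => h w hw hle hτle⟩)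
    have h2 : ∃ w ∈ A ∪ A', z ≤ w ∧ τ z ≤ τ w ∧ w ≠ z := by
      by_contra h
      push_neg at h
      exact hzD (Finset.mem_filter.mpr ⟨hz, fun w hw hle hτle => h w hw hle hτle⟩)
    obtain ⟨w₁, hw₁U, hw₁le, hw₁τle, hw₁ne⟩ := h1
    obtain ⟨w₂, hw₂U, hw₂le, hw₂τle, hw₂ne⟩ := h2
    rcases Finset.mem_union.mp hz with hzA | hzA'
    · have hw₁A' : w₁ ∈ A' := by
        rcases Finset.mem_union.mp hw₁U with h | h
        · exact absurd (dec_pair hAdec h hzA hw₁le hw₁τle) hw₁ne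
        · exact h
      have hw₂A' : w₂ ∈ A' := by
        rcases Finset.mem_union.mp hw₂U with h | h
        · exact absurd (dec_pair hAdec hzA h hw₂le hw₂τle).symm hw₂ne
        · exact h
      have : w₁ = w₂ := dec_pair hA'dec hw₁A' hw₂A' (le_trans hw₁le hw₂le)
        (le_trans hw₁τle hw₂τle)
      subst this
      exact hw₁ne (le_antisymm hw₁le hw₂le)
    · have hw₁A : w₁ ∈ A := by
        rcases Finset.mem_union.mp hw₁U with h | h
        · exact h
        · exact absurd (dec_pair hA'dec h hzA' hw₁le hw₁τle) hw₁ne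
      have hw₂A : w₂ ∈ A := by
        rcases Finset.mem_union.mp hw₂U with h | h
        · exact h
        · exact absurd (dec_pair hA'dec hzA' h hw₂le hw₂τle).symm hw₂ne
      have : w₁ = w₂ := dec_pair hAdec hw₁A hw₂A (le_trans hw₁le hw₂le)
        (le_trans hw₁τle hw₂τle)
      subst this
      exact hw₁ne (le_antisymm hw₁le hw₂le)
  -- A ∩ A' ⊆ C ∩ D
  have hinter : A ∩ A' ⊆ C ∩ D := by
    intro z hz
    obtain ⟨hzA, hzA'⟩ := Finset.mem_inter.mp hz
    refine Finset.mem_inter.mpr ⟨Finset.mem_filter.mpr ⟨Finset.mem_union_left _ hzA, ?_⟩,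
      Finset.mem_filter.mpr ⟨Finset.mem_union_left _ hzA, ?_⟩⟩
    · intro w hw hle hτle
      rcases Finset.mem_union.mp hw with h | h
      · exact dec_pair hAdec h hzA hle hτle
      · exact dec_pair hA'dec h hzA' hle hτle
    · intro w hw hle hτle
      rcases Finset.mem_union.mp hw with h | h
      · exact (dec_pair hAdec hzA h hle hτle).symm
      · exact (dec_pair hA'dec hzA' h hle hτle).symm
  have hcardA' : A'.card = A.card := Finset.card_image_of_injective _ hinv.injective
  have hCD : C.card + D.card ≥ 2 * A.card := by
    have h1 : (C ∪ D).card + (C ∩ D).card = C.card + D.card :=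
      Finset.card_union_add_card_inter C D
    have h2 : (A ∪ A').card ≤ (C ∪ D).card := Finset.card_le_card hunion
    have h3 : (A ∩ A').card ≤ (C ∩ D).card := Finset.card_le_card hinter
    have h4 : (A ∪ A').card + (A ∩ A').card = A.card + A'.card :=
      Finset.card_union_add_card_inter A A'
    omega
  have hCcard : C.card = A.card := by
    have h1 : C.card ≤ A.card := hmax C hCdec
    have h2 : D.card ≤ A.card := hmax D hDdec
    omega
  -- C is τ-invariant
  have hCinv : ∀ z ∈ C, τ z ∈ C := by
    intro z hz
    obtain ⟨hzU, hzmin⟩ := Finset.mem_filter.mp hz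
    refine Finset.mem_filter.mpr ⟨hUinv z hzU, ?_⟩
    intro w hw hle hτle
    rw [hinv z] at hτle
    have hτw : τ w ∈ A ∪ A' := hUinv w hw
    have : τ w = z := hzmin (τ w) hτw hτle (by rw [hinv w]; exact hle)
    rw [← this, hinv w]
  have hCeven : Even C.card := even_card_of_invariant ⇑τ hinv hfpf C hCinv
  exact ⟨C, hCdec, hCeven, by rw [hCcard]; exact hmax S hS⟩


variable {K : ℕ}

/-! ### indexing helpers -/

def toIdx (s : Finset (Fin N)) (h : s.card = K) (x : Fin N) (hx : x ∈ s) : Fin K :=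
  (s.orderIsoOfFin h).symm ⟨x, hx⟩

@[simp] lemma emb_toIdx (s : Finset (Fin N)) (h : s.card = K) (x : Fin N) (hx : x ∈ s) :
    s.orderEmbOfFin h (toIdx s h x hx) = x := by
  rw [toIdx, ← Finset.coe_orderIsoOfFin_apply, OrderIso.apply_symm_apply]

@[simp] lemma toIdx_emb (s : Finset (Fin N)) (h : s.card = K) (i : Fin K)
    (hi : s.orderEmbOfFin h i ∈ s) : toIdx s h (s.orderEmbOfFin h i) hi = i := by
  apply (s.orderEmbOfFin h).injective
  exact emb_toIdx s h _ hi

lemma orderEmbOfFin_congr {s s' : Finset (Fin N)} (hss : s = s') {k k' : ℕ}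
    (hs : s.card = k) (hs' : s'.card = k') (i : ℕ) (hi : i < k) (hi' : i < k') :
    s.orderEmbOfFin hs ⟨i, hi⟩ = s'.orderEmbOfFin hs' ⟨i, hi'⟩ := by
  subst hss; subst hs; subst hs'; rfl

/-! ### restriction of a permutation to an invariant finset -/

def restrFun (σ : Equiv.Perm (Fin N)) (B : Finset (Fin N)) (hB : B.card = K)
    (hmaps : ∀ x ∈ B, σ x ∈ B) : Fin K → Fin K :=
  fun i => toIdx B hB (σ (B.orderEmbOfFin hB i)) (hmaps _ (B.orderEmbOfFin_mem hB i))

lemma restrFun_char (σ : Equiv.Perm (Fin N)) (B : Finset (Fin N)) (hB : B.card = K)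
    (hmaps : ∀ x ∈ B, σ x ∈ B) (i : Fin K) :
    B.orderEmbOfFin hB (restrFun σ B hB hmaps i) = σ (B.orderEmbOfFin hB i) := by
  rw [restrFun, emb_toIdx]

lemma restrFun_inv (σ : Equiv.Perm (Fin N)) (B : Finset (Fin N)) (hB : B.card = K)
    (hmaps : ∀ x ∈ B, σ x ∈ B) (hinv : Function.Involutive ⇑σ) :
    Function.Involutive (restrFun σ B hB hmaps) := by
  intro i
  apply (B.orderEmbOfFin hB).injective
  rw [restrFun_char, restrFun_char, hinv]

def restrPerm (σ : Equiv.Perm (Fin N)) (B : Finset (Fin N)) (hB : B.card = K)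
    (hmaps : ∀ x ∈ B, σ x ∈ B) (hinv : Function.Involutive ⇑σ) : Equiv.Perm (Fin K) :=
  (restrFun_inv σ B hB hmaps hinv).toPerm _

lemma restrPerm_apply (σ : Equiv.Perm (Fin N)) (B : Finset (Fin N)) (hB : B.card = K)
    (hmaps : ∀ x ∈ B, σ x ∈ B) (hinv : Function.Involutive ⇑σ) (i : Fin K) :
    restrPerm σ B hB hmaps hinv i = restrFun σ B hB hmaps i := rfl

/-! ### extension of a permutation by fixed points -/

def extFun (F : Finset (Fin N)) (hF : Fᶜ.card = K) (τ : Equiv.Perm (Fin K)) :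
    Fin N → Fin N :=
  fun x => if hx : x ∈ Fᶜ then Fᶜ.orderEmbOfFin hF (τ (toIdx Fᶜ hF x hx)) else x

lemma extFun_of_mem_compl (F : Finset (Fin N)) (hF : Fᶜ.card = K) (τ : Equiv.Perm (Fin K))
    (x : Fin N) (hx : x ∈ Fᶜ) :
    extFun F hF τ x = Fᶜ.orderEmbOfFin hF (τ (toIdx Fᶜ hF x hx)) := dif_pos hx

lemma extFun_fix (F : Finset (Fin N)) (hF : Fᶜ.card = K) (τ : Equiv.Perm (Fin K))
    (x : Fin N) (hx : x ∈ F) : extFun F hF τ x = x := by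
  rw [extFun, dif_neg]
  simp [hx]

lemma extFun_emb (F : Finset (Fin N)) (hF : Fᶜ.card = K) (τ : Equiv.Perm (Fin K))
    (i : Fin K) : extFun F hF τ (Fᶜ.orderEmbOfFin hF i) = Fᶜ.orderEmbOfFin hF (τ i) := by
  rw [extFun, dif_pos (Fᶜ.orderEmbOfFin_mem hF i), toIdx_emb]

lemma extFun_inv (F : Finset (Fin N)) (hF : Fᶜ.card = K) (τ : Equiv.Perm (Fin K))
    (hτ : Function.Involutive ⇑τ) : Function.Involutive (extFun F hF τ) := by
  intro x
  by_cases hx : x ∈ Fᶜ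
  · have hx' : x = Fᶜ.orderEmbOfFin hF (toIdx Fᶜ hF x hx) := (emb_toIdx _ _ _ _).symm
    rw [hx', extFun_emb, extFun_emb, hτ]
  · have hxF : x ∈ F := by simpa using hx
    rw [extFun_fix _ _ _ _ hxF, extFun_fix _ _ _ _ hxF]

def extPerm (F : Finset (Fin N)) (hF : Fᶜ.card = K) (τ : Equiv.Perm (Fin K))
    (hτ : Function.Involutive ⇑τ) : Equiv.Perm (Fin N) :=
  (extFun_inv F hF τ hτ).toPerm _

lemma extPerm_apply (F : Finset (Fin N)) (hF : Fᶜ.card = K) (τ : Equiv.Perm (Fin K))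
    (hτ : Function.Involutive ⇑τ) (x : Fin N) :
    extPerm F hF τ hτ x = extFun F hF τ x := rfl


section Main

variable {N K : ℕ}

def fixedS (σ : Equiv.Perm (Fin N)) : Finset (Fin N) :=
  Finset.univ.filter (fun x => σ x = x)

lemma mem_fixedS {σ : Equiv.Perm (Fin N)} {x : Fin N} : x ∈ fixedS σ ↔ σ x = x := by
  simp [fixedS]

lemma compl_card {σ : Equiv.Perm (Fin N)} {m : ℕ} (h : (fixedS σ).card = m) :
    ((fixedS σ)ᶜ).card = N - m := by
  rw [Finset.card_compl, Fintype.card_fin, h]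

lemma maps_compl (σ : Equiv.Perm (Fin N)) (hinv : Function.Involutive ⇑σ) :
    ∀ x ∈ (fixedS σ)ᶜ, σ x ∈ (fixedS σ)ᶜ := by
  intro x hx
  rw [Finset.mem_compl, mem_fixedS] at *
  intro h
  exact hx (h.symm.trans (hinv x))

lemma orderEmbOfFin_congr'' {s s' : Finset (Fin N)} (hss : s = s')
    (hs : s.card = K) (hs' : s'.card = K) (i : Fin K) :
    s.orderEmbOfFin hs i = s'.orderEmbOfFin hs' i := by
  subst hss; rfl

lemma restrPerm_inv (σ : Equiv.Perm (Fin N)) (B : Finset (Fin N)) (hB : B.card = K)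
    (hmaps : ∀ x ∈ B, σ x ∈ B) (hinv : Function.Involutive ⇑σ) :
    Function.Involutive ⇑(restrPerm σ B hB hmaps hinv) :=
  restrFun_inv σ B hB hmaps hinv

lemma restrPerm_fpf (σ : Equiv.Perm (Fin N)) (B : Finset (Fin N)) (hB : B.card = K)
    (hmaps : ∀ x ∈ B, σ x ∈ B) (hinv : Function.Involutive ⇑σ)
    (hnofix : ∀ x ∈ B, σ x ≠ x) (i : Fin K) :
    restrPerm σ B hB hmaps hinv i ≠ i := by
  intro h
  have := restrFun_char σ B hB hmaps i
  rw [restrPerm_apply] at h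
  rw [h] at this
  exact hnofix _ (B.orderEmbOfFin_mem hB i) this.symm

lemma decBound_restr (σ : Equiv.Perm (Fin N)) (B : Finset (Fin N)) (hB : B.card = K)
    (hmaps : ∀ x ∈ B, σ x ∈ B) (hinv : Function.Involutive ⇑σ) {L : ℕ}
    (h : DecBound ⇑σ L) : DecBound ⇑(restrPerm σ B hB hmaps hinv) L := by
  intro T hT
  have himg : DecOn ⇑σ (T.image (B.orderEmbOfFin hB)) := by
    rintro x hx y hy hxy
    obtain ⟨i, hi, rfl⟩ := Finset.mem_image.mp hx
    obtain ⟨j, hj, rfl⟩ := Finset.mem_image.mp hy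
    have hij : i < j := (B.orderEmbOfFin hB).lt_iff_lt.mp hxy
    have hρ := hT i hi j hj hij
    rw [restrPerm_apply, restrPerm_apply] at hρ
    have := (B.orderEmbOfFin hB).strictMono hρ
    rwa [restrFun_char, restrFun_char] at this
  calc T.card = (T.image (B.orderEmbOfFin hB)).card :=
        (Finset.card_image_of_injective _ (B.orderEmbOfFin hB).injective).symm
    _ ≤ L := h _ himg

lemma decBound_restr_even (σ : Equiv.Perm (Fin N)) (B : Finset (Fin N)) (hB : B.card = K)
    (hmaps : ∀ x ∈ B, σ x ∈ B) (hinv : Function.Involutive ⇑σ)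
    (hnofix : ∀ x ∈ B, σ x ≠ x) {l : ℕ} (h : DecBound ⇑σ (2 * l + 1)) :
    DecBound ⇑(restrPerm σ B hB hmaps hinv) (2 * l) := by
  intro T hT
  obtain ⟨T', hT'dec, hT'even, hT'card⟩ :=
    exists_even_dec _ (restrPerm_inv σ B hB hmaps hinv)
      (restrPerm_fpf σ B hB hmaps hinv hnofix) T hT
  have h1 : T'.card ≤ 2 * l + 1 := decBound_restr σ B hB hmaps hinv h T' hT'dec
  obtain ⟨c, hc⟩ := hT'even
  omega

lemma decBound_ext (F : Finset (Fin N)) (hF : Fᶜ.card = K) (τ : Equiv.Perm (Fin K))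
    (hτ : Function.Involutive ⇑τ) {L : ℕ} (hdec : DecBound ⇑τ L) :
    DecBound ⇑(extPerm F hF τ hτ) (L + 1) := by
  intro S hS
  have h1 : (S ∩ F).card ≤ 1 := by
    rw [Finset.card_le_one]
    intro a ha b hb
    obtain ⟨haS, haF⟩ := Finset.mem_inter.mp ha
    obtain ⟨hbS, hbF⟩ := Finset.mem_inter.mp hb
    rcases lt_trichotomy a b with h | h | h
    · have := hS a haS b hbS h
      rw [extPerm_apply, extPerm_apply, extFun_fix _ _ _ _ haF, extFun_fix _ _ _ _ hbF] at this
      exact absurd h (not_lt_of_gt this)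
    · exact h
    · have := hS b hbS a haS h
      rw [extPerm_apply, extPerm_apply, extFun_fix _ _ _ _ haF, extFun_fix _ _ _ _ hbF] at this
      exact absurd h (not_lt_of_gt this)
  have hmemc : ∀ x ∈ S \ F, x ∈ Fᶜ := by
    intro x hx
    exact Finset.mem_compl.mpr (Finset.mem_sdiff.mp hx).2
  set T : Finset (Fin K) :=
    (S \ F).attach.image (fun x => toIdx Fᶜ hF x.1 (hmemc x.1 x.2)) with hT
  have hTcard : T.card = (S \ F).card := by
    rw [hT, Finset.card_image_of_injective, Finset.card_attach]
    intro a b hab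
    have : (Fᶜ.orderEmbOfFin hF) (toIdx Fᶜ hF a.1 (hmemc a.1 a.2)) =
        (Fᶜ.orderEmbOfFin hF) (toIdx Fᶜ hF b.1 (hmemc b.1 b.2)) := congrArg _ hab
    rw [emb_toIdx, emb_toIdx] at this
    exact Subtype.ext this
  have hTdec : DecOn ⇑τ T := by
    rintro i hi j hj hij
    obtain ⟨⟨a, haS⟩, -, rfl⟩ := Finset.mem_image.mp hi
    obtain ⟨⟨b, hbS⟩, -, rfl⟩ := Finset.mem_image.mp hj
    have hab : a < b := by
      have := (Fᶜ.orderEmbOfFin hF).strictMono hij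
      rwa [emb_toIdx, emb_toIdx] at this
    have hdecS := hS a (Finset.mem_sdiff.mp haS).1 b (Finset.mem_sdiff.mp hbS).1 hab
    rw [extPerm_apply, extPerm_apply, extFun_of_mem_compl _ _ _ _ (hmemc a haS),
      extFun_of_mem_compl _ _ _ _ (hmemc b hbS)] at hdecS
    exact (Fᶜ.orderEmbOfFin hF).lt_iff_lt.mp hdecS
  have h2 : (S \ F).card ≤ L := hTcard ▸ hdec T hTdec
  have h3 : (S ∩ F).card + (S \ F).card = S.card := by
    rw [Finset.card_inter_add_card_sdiff]
  omega

end Main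

section Bij

variable {n m l : ℕ}

lemma compl_nofix (σ : Equiv.Perm (Fin n)) :
    ∀ x ∈ (fixedS σ)ᶜ, σ x ≠ x := by
  intro x hx
  rw [Finset.mem_compl, mem_fixedS] at hx
  exact hx

def Phi (n m l : ℕ)
    (s : {σ : Equiv.Perm (Fin n) // Function.Involutive ⇑σ ∧ (fixedS σ).card = m ∧
      DecBound ⇑σ (2 * l + 1)}) :
    {F : Finset (Fin n) // F.card = m} ×
      {τ : Equiv.Perm (Fin (n - m)) // Function.Involutive ⇑τ ∧ (fixedS τ).card = 0 ∧
        DecBound ⇑τ (2 * l)} :=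
  ⟨⟨fixedS s.1, s.2.2.1⟩,
   ⟨restrPerm s.1 (fixedS s.1)ᶜ (compl_card s.2.2.1) (maps_compl s.1 s.2.1) s.2.1,
    restrPerm_inv _ _ _ _ _,
    by
      rw [Finset.card_eq_zero, Finset.eq_empty_iff_forall_notMem]
      intro i hi
      exact restrPerm_fpf s.1 _ (compl_card s.2.2.1) (maps_compl s.1 s.2.1) s.2.1
        (compl_nofix s.1) i (mem_fixedS.mp hi),
    decBound_restr_even s.1 _ (compl_card s.2.2.1) (maps_compl s.1 s.2.1) s.2.1
      (compl_nofix s.1) s.2.2.2⟩⟩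

lemma Phi_bijective (n m l : ℕ) : Function.Bijective (Phi n m l) := by
  constructor
  · rintro ⟨σ1, h1inv, h1fix, h1dec⟩ ⟨σ2, h2inv, h2fix, h2dec⟩ h
    have hFeq : fixedS σ1 = fixedS σ2 := congrArg (fun p => p.1.1) h
    have hρeq : restrPerm σ1 (fixedS σ1)ᶜ (compl_card h1fix) (maps_compl σ1 h1inv) h1inv =
        restrPerm σ2 (fixedS σ2)ᶜ (compl_card h2fix) (maps_compl σ2 h2inv) h2inv :=
      congrArg (fun p => p.2.1) h
    refine Subtype.ext (Equiv.ext fun x => ?_)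
    by_cases hx : x ∈ fixedS σ1
    · have e1 : σ1 x = x := mem_fixedS.mp hx
      have e2 : σ2 x = x := mem_fixedS.mp (hFeq ▸ hx)
      rw [e1, e2]
    · have hx1 : x ∈ (fixedS σ1)ᶜ := Finset.mem_compl.mpr hx
      have hx2 : x ∈ (fixedS σ2)ᶜ := Finset.mem_compl.mpr (hFeq ▸ hx)
      have hB : (fixedS σ1)ᶜ = (fixedS σ2)ᶜ := by rw [hFeq]
      have hxe : x = ((fixedS σ1)ᶜ).orderEmbOfFin (compl_card h1fix)
          (toIdx _ (compl_card h1fix) x hx1) := (emb_toIdx _ _ _ _).symm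
      have hidx : toIdx _ (compl_card h2fix) x hx2 = toIdx _ (compl_card h1fix) x hx1 := by
        apply (((fixedS σ2)ᶜ).orderEmbOfFin (compl_card h2fix)).injective
        rw [emb_toIdx, ← orderEmbOfFin_congr'' hB (compl_card h1fix) (compl_card h2fix)]
        exact hxe
      have k1 : σ1 x = ((fixedS σ1)ᶜ).orderEmbOfFin (compl_card h1fix)
          (restrPerm σ1 (fixedS σ1)ᶜ (compl_card h1fix) (maps_compl σ1 h1inv) h1inv
            (toIdx _ (compl_card h1fix) x hx1)) := by
        rw [restrPerm_apply, restrFun_char]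
        conv_lhs => rw [hxe]
      have k2 : σ2 x = ((fixedS σ2)ᶜ).orderEmbOfFin (compl_card h2fix)
          (restrPerm σ2 (fixedS σ2)ᶜ (compl_card h2fix) (maps_compl σ2 h2inv) h2inv
            (toIdx _ (compl_card h2fix) x hx2)) := by
        rw [restrPerm_apply, restrFun_char, emb_toIdx]
      rw [k1, k2, hidx, ← hρeq]
      exact orderEmbOfFin_congr'' hB (compl_card h1fix) (compl_card h2fix) _
  · rintro ⟨⟨F, hF⟩, ⟨τ, hτinv, hτfix, hτdec⟩⟩
    have hτfpf : ∀ i, τ i ≠ i := by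
      intro i hi
      have hmem : i ∈ fixedS τ := mem_fixedS.mpr hi
      rw [Finset.card_eq_zero] at hτfix
      rw [hτfix] at hmem
      exact absurd hmem (Finset.notMem_empty i)
    have hFc : Fᶜ.card = n - m := by rw [Finset.card_compl, Fintype.card_fin, hF]
    set σ : Equiv.Perm (Fin n) := extPerm F hFc τ hτinv with hσdef
    have hσinv : Function.Involutive ⇑σ := extFun_inv F hFc τ hτinv
    have hfixσ : fixedS σ = F := by
      ext x
      rw [mem_fixedS]
      constructor
      · intro h
        by_contra hxF
        have hx : x ∈ Fᶜ := Finset.mem_compl.mpr hxF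
        have hxe : x = Fᶜ.orderEmbOfFin hFc (toIdx Fᶜ hFc x hx) := (emb_toIdx _ _ _ _).symm
        have hσx : σ x = Fᶜ.orderEmbOfFin hFc (τ (toIdx Fᶜ hFc x hx)) :=
          extFun_of_mem_compl F hFc τ x hx
        rw [hσx] at h
        have h2 : Fᶜ.orderEmbOfFin hFc (τ (toIdx Fᶜ hFc x hx)) =
            Fᶜ.orderEmbOfFin hFc (toIdx Fᶜ hFc x hx) := by rw [h]; exact hxe
        exact hτfpf _ ((Fᶜ.orderEmbOfFin hFc).injective h2)
      · intro h
        exact extFun_fix F hFc τ x h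
    have hfixcard : (fixedS σ).card = m := by rw [hfixσ, hF]
    refine ⟨⟨σ, hσinv, hfixcard, decBound_ext F hFc τ hτinv hτdec⟩, ?_⟩
    have hB : (fixedS σ)ᶜ = Fᶜ := by rw [hfixσ]
    refine Prod.ext ?_ ?_
    · exact Subtype.ext hfixσ
    · refine Subtype.ext (Equiv.ext fun i => ?_)
      apply (Fᶜ.orderEmbOfFin hFc).injective
      calc Fᶜ.orderEmbOfFin hFc (restrPerm σ (fixedS σ)ᶜ (compl_card hfixcard)
              (maps_compl σ hσinv) hσinv i)
          = ((fixedS σ)ᶜ).orderEmbOfFin (compl_card hfixcard) (restrPerm σ (fixedS σ)ᶜ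
              (compl_card hfixcard) (maps_compl σ hσinv) hσinv i) :=
            (orderEmbOfFin_congr'' hB (compl_card hfixcard) hFc _).symm
        _ = σ (((fixedS σ)ᶜ).orderEmbOfFin (compl_card hfixcard) i) := by
            rw [restrPerm_apply, restrFun_char]
        _ = σ (Fᶜ.orderEmbOfFin hFc i) := by
            rw [orderEmbOfFin_congr'' hB (compl_card hfixcard) hFc i]
        _ = Fᶜ.orderEmbOfFin hFc (τ i) := extFun_emb F hFc τ i
  
lemma invCount_eq (n m l : ℕ) :
    Nat.card {σ : Equiv.Perm (Fin n) // Function.Involutive ⇑σ ∧ (fixedS σ).card = m ∧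
        DecBound ⇑σ (2 * l + 1)}
      = n.choose m * Nat.card {τ : Equiv.Perm (Fin (n - m)) // Function.Involutive ⇑τ ∧
        (fixedS τ).card = 0 ∧ DecBound ⇑τ (2 * l)} := by
  rw [Nat.card_congr (Equiv.ofBijective _ (Phi_bijective n m l)), Nat.card_prod]
  congr 1
  rw [Nat.card_eq_fintype_card, Fintype.card_finset_len, Fintype.card_fin]

end Bij

section Bound

/-- The crude counting bound: involutive-type permutations are at most
`2^n * (n+1)^(n/2)`. -/
lemma gSCount_le (n m l : ℕ) : gSCount n m l ≤ 2 ^ n * (n + 1) ^ (n / 2) := by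
  classical
  rw [gSCount_eq_invCount]
  set X := {σ : Equiv.Perm (Fin n) // Function.Involutive ⇑σ ∧
    (Finset.univ.filter fun x => σ x = x).card = m ∧ DecBound ⇑σ l} with hX
  -- the "upper" set of a permutation
  set B : Equiv.Perm (Fin n) → Finset (Fin n) :=
    fun σ => Finset.univ.filter (fun x => x < σ x) with hB
  have hBhalf : ∀ (σ : Equiv.Perm (Fin n)), Function.Involutive ⇑σ → (B σ).card ≤ n / 2 := by
    intro σ hinv
    have hdisj : Disjoint (B σ) ((B σ).image ⇑σ) := by
      rw [Finset.disjoint_left]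
      intro a ha hb
      obtain ⟨c, hc, hca⟩ := Finset.mem_image.mp hb
      rw [hB] at ha hc
      simp only [Finset.mem_filter, Finset.mem_univ, true_and] at ha hc
      -- a = σ c, c < σ c, a < σ a ; σ a = σ (σ c) = c
      rw [← hca] at ha
      rw [hinv c] at ha
      exact absurd (lt_trans hc ha) (lt_irrefl _)
    have hcard : (B σ).card + ((B σ).image ⇑σ).card ≤ n := by
      rw [← Finset.card_union_of_disjoint hdisj]
      calc ((B σ) ∪ (B σ).image ⇑σ).card ≤ (Finset.univ : Finset (Fin n)).card :=
            Finset.card_le_card (Finset.subset_univ _)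
        _ = n := by rw [Finset.card_univ, Fintype.card_fin]
    rw [Finset.card_image_of_injective _ (Equiv.injective σ)] at hcard
    omega
  set Ψ : X → Finset (Fin n) × (Fin (n / 2) → Option (Fin n)) := fun s =>
    ⟨B s.1, fun i => if h : (i : ℕ) < (B s.1).card
      then some (s.1 ((B s.1).orderEmbOfFin rfl ⟨(i : ℕ), h⟩)) else none⟩ with hΨ
  have hΨinj : Function.Injective Ψ := by
    rintro ⟨σ1, h1inv, h1f, h1d⟩ ⟨σ2, h2inv, h2f, h2d⟩ h
    simp only [hΨ, Prod.mk.injEq] at h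
    obtain ⟨hBeq, hgeq⟩ := h
    have hcard12 : (B σ1).card = (B σ2).card := by rw [hBeq]
    -- σ1 and σ2 agree on B σ1
    have agree : ∀ x ∈ B σ1, σ1 x = σ2 x := by
      intro x hx
      have hi : (toIdx (B σ1) rfl x hx : ℕ) < (B σ1).card := (toIdx (B σ1) rfl x hx).2
      have hilt : (toIdx (B σ1) rfl x hx : ℕ) < n / 2 :=
        lt_of_lt_of_le hi (hBhalf σ1 h1inv)
      have := congrFun hgeq ⟨(toIdx (B σ1) rfl x hx : ℕ), hilt⟩
      rw [dif_pos hi, dif_pos (hcard12 ▸ hi)] at this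
      have hembeq : (B σ2).orderEmbOfFin rfl ⟨(toIdx (B σ1) rfl x hx : ℕ), hcard12 ▸ hi⟩ =
          (B σ1).orderEmbOfFin rfl ⟨(toIdx (B σ1) rfl x hx : ℕ), hi⟩ :=
        (orderEmbOfFin_congr hBeq rfl rfl _ hi (hcard12 ▸ hi)).symm
      rw [hembeq] at this
      have hx' : (B σ1).orderEmbOfFin rfl ⟨(toIdx (B σ1) rfl x hx : ℕ), hi⟩ = x := by
        rw [Fin.eta]
        exact emb_toIdx _ _ _ _
      rw [hx'] at this
      exact Option.some.inj this
    have himg : (B σ1).image ⇑σ1 = (B σ1).image ⇑σ2 :=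
      Finset.image_congr (fun x hx => agree x hx)
    refine Subtype.ext (Equiv.ext fun x => ?_)
    have hmemB : ∀ y : Fin n, y ∈ B σ1 ↔ y < σ1 y := by
      intro y; simp [hB]
    have hmemB2 : ∀ y : Fin n, y ∈ B σ2 ↔ y < σ2 y := by
      intro y; simp [hB]
    rcases lt_trichotomy x (σ1 x) with hlt | heq | hgt
    · exact agree x ((hmemB x).mpr hlt)
    · -- σ1 x = x
      rcases lt_trichotomy x (σ2 x) with hlt2 | heq2 | hgt2
      · have hmem : x ∈ B σ1 := hBeq ▸ (hmemB2 x).mpr hlt2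
        have hcontr : x < σ1 x := (hmemB x).mp hmem
        rw [← heq] at hcontr
        exact absurd hcontr (lt_irrefl x)
      · rw [← heq, ← heq2]
      · -- σ2 x < x : x ∈ image σ2 (B σ2) = image σ1 (B σ1)
        have hσ2x : σ2 x ∈ B σ2 := by
          rw [hmemB2]
          rw [h2inv x]
          exact hgt2
        have hximg : x ∈ (B σ1).image ⇑σ1 := by
          rw [himg, hBeq]
          exact Finset.mem_image.mpr ⟨σ2 x, hσ2x, h2inv x⟩
        obtain ⟨b, hb, hbx⟩ := Finset.mem_image.mp hximg
        have hblt : b < σ1 b := (hmemB b).mp hb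
        rw [hbx] at hblt
        -- b < x, and σ1 x = x means x = σ1 x; σ1 x = σ1 (σ1 b) = b
        have : σ1 x = b := by rw [← hbx, h1inv b]
        rw [← heq] at this
        rw [this] at hblt
        exact absurd hblt (lt_irrefl _)
    · -- σ1 x < x
      have hσ1x : σ1 x ∈ B σ1 := by
        rw [hmemB, h1inv x]
        exact hgt
      have hximg : x ∈ (B σ1).image ⇑σ2 := by
        rw [← himg]
        exact Finset.mem_image.mpr ⟨σ1 x, hσ1x, h1inv x⟩
      obtain ⟨b, hb, hbx⟩ := Finset.mem_image.mp hximg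
      -- σ2 x = σ2 (σ2 b) = b
      have h2x : σ2 x = b := by rw [← hbx, h2inv b]
      -- also σ2 b = x = σ1 (σ1 x) and σ1 b = σ2 b (agree), so σ1 b = x, b = σ1 x
      have h1b : σ1 b = x := by rw [agree b hb, hbx]
      have : σ1 x = b := by
        have := congrArg ⇑σ1 h1b
        rw [h1inv b] at this
        exact this.symm
      rw [this, h2x]
  calc Nat.card X ≤ Nat.card (Finset (Fin n) × (Fin (n / 2) → Option (Fin n))) :=
        Nat.card_le_card_of_injective Ψ hΨinj
    _ = 2 ^ n * (n + 1) ^ (n / 2) := by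
        rw [Nat.card_eq_fintype_card, Fintype.card_prod, Fintype.card_finset, Fintype.card_fin,
          Fintype.card_fun, Fintype.card_option, Fintype.card_fin, Fintype.card_fin]

end Bound

section Summ

open Finset Nat

lemma summable_half (h : ℕ → ℝ) (h0 : ∀ k, 0 ≤ h k) (hs : Summable h) :
    Summable (fun n => h ((n + 1) / 2)) := by
  have hts : 0 ≤ ∑' k, h k := tsum_nonneg h0
  apply summable_of_sum_range_le (c := 2 * ∑' k, h k) (fun n => h0 _)
  intro K
  have hcard : ∀ j : ℕ, ((Finset.range K).filter (fun k => (k + 1) / 2 = j)).card ≤ 2 := by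
    intro j
    have hsub : (Finset.range K).filter (fun k => (k + 1) / 2 = j) ⊆ {2 * j - 1, 2 * j} := by
      intro k hk
      simp only [Finset.mem_filter, Finset.mem_range] at hk
      simp only [Finset.mem_insert, Finset.mem_singleton]
      omega
    calc ((Finset.range K).filter (fun k => (k + 1) / 2 = j)).card
        ≤ ({2 * j - 1, 2 * j} : Finset ℕ).card := Finset.card_le_card hsub
      _ ≤ 2 := by
          apply le_trans (Finset.card_insert_le _ _)
          simp
  calc ∑ k ∈ Finset.range K, h ((k + 1) / 2)
      = ∑ j ∈ (Finset.range K).image (fun k => (k + 1) / 2),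
          ((Finset.range K).filter (fun k => (k + 1) / 2 = j)).card • h j :=
        Finset.sum_comp h (fun k => (k + 1) / 2)
    _ ≤ ∑ j ∈ (Finset.range K).image (fun k => (k + 1) / 2), 2 * h j := by
        apply Finset.sum_le_sum
        intro j hj
        rw [nsmul_eq_mul]
        exact mul_le_mul_of_nonneg_right (by exact_mod_cast hcard j) (h0 j)
    _ = 2 * ∑ j ∈ (Finset.range K).image (fun k => (k + 1) / 2), h j := by
        rw [Finset.mul_sum]
    _ ≤ 2 * ∑' k, h k := by
        apply mul_le_mul_of_nonneg_left _ (by norm_num)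
        exact Summable.sum_le_tsum _ (fun j _ => h0 j) hs

lemma majorant_summable (c : ℝ) (hc : 0 ≤ c) :
    Summable (fun n : ℕ => c ^ n * ((2 ^ n * (n + 1) ^ (n / 2) : ℕ) : ℝ) / (n ! : ℝ)) := by
  set D : ℝ := (4 * c + 1) ^ 2 with hD
  have hD0 : (0:ℝ) ≤ D := sq_nonneg _
  have hf : Summable (fun k : ℕ => D ^ k / (k ! : ℝ)) := Real.summable_pow_div_factorial D
  have hf0 : ∀ k, 0 ≤ D ^ k / (k ! : ℝ) := fun k =>
    div_nonneg (pow_nonneg hD0 _) (by positivity)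
  have hmaj := summable_half _ hf0 hf
  apply Summable.of_nonneg_of_le _ _ hmaj
  · intro n; positivity
  · intro n
    set h : ℕ := (n + 1) / 2 with hh
    have h1 : n / 2 = n - h := by omega
    have h2 : (n:ℕ) + 1 ≤ 2 * (h + 1) := by omega
    have h3 : n ≤ 2 * h := by omega
    have h4 : h ≤ n := by omega
    have hfact : ((h + 1 : ℕ) : ℝ) ^ (n / 2) * (h ! : ℝ) ≤ (n ! : ℝ) := by
      have hnat := Nat.factorial_mul_pow_le_factorial (m := h) (n := n - h)
      have hn : h + (n - h) = n := by omega
      rw [hn] at hnat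
      rw [h1]
      calc ((h + 1 : ℕ) : ℝ) ^ (n - h) * (h ! : ℝ)
          = ((h ! * (h + 1) ^ (n - h) : ℕ) : ℝ) := by push_cast; ring
        _ ≤ (n ! : ℝ) := by exact_mod_cast hnat
    have hcast : ((2 ^ n * (n + 1) ^ (n / 2) : ℕ) : ℝ) =
        2 ^ n * ((n + 1 : ℕ) : ℝ) ^ (n / 2) := by push_cast; ring
    rw [div_le_div_iff₀ (by positivity) (by positivity), hcast]
    have step1 : ((n + 1 : ℕ) : ℝ) ^ (n / 2) ≤ 2 ^ n * ((h + 1 : ℕ) : ℝ) ^ (n / 2) := by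
      calc ((n + 1 : ℕ) : ℝ) ^ (n / 2) ≤ (2 * ((h + 1 : ℕ) : ℝ)) ^ (n / 2) := by
            apply pow_le_pow_left₀ (by positivity)
            exact_mod_cast h2
        _ = 2 ^ (n / 2) * ((h + 1 : ℕ) : ℝ) ^ (n / 2) := mul_pow _ _ _
        _ ≤ 2 ^ n * ((h + 1 : ℕ) : ℝ) ^ (n / 2) := by
            apply mul_le_mul_of_nonneg_right _ (by positivity)
            exact pow_le_pow_right₀ one_le_two (by omega)
    have h4n : (4:ℝ) ^ n = 2 ^ n * 2 ^ n := by
      rw [← mul_pow]; norm_num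
    calc c ^ n * (2 ^ n * ((n + 1 : ℕ) : ℝ) ^ (n / 2)) * (h ! : ℝ)
        ≤ c ^ n * (2 ^ n * (2 ^ n * ((h + 1 : ℕ) : ℝ) ^ (n / 2))) * (h ! : ℝ) := by
          have hc2 : (0:ℝ) ≤ c ^ n * 2 ^ n := by positivity
          have := mul_le_mul_of_nonneg_left step1 hc2
          calc c ^ n * (2 ^ n * ((n + 1 : ℕ) : ℝ) ^ (n / 2)) * (h ! : ℝ)
              = (c ^ n * 2 ^ n * ((n + 1 : ℕ) : ℝ) ^ (n / 2)) * (h ! : ℝ) := by ring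
            _ ≤ (c ^ n * 2 ^ n * (2 ^ n * ((h + 1 : ℕ) : ℝ) ^ (n / 2))) * (h ! : ℝ) := by
                apply mul_le_mul_of_nonneg_right _ (by positivity)
                calc c ^ n * 2 ^ n * ((n + 1 : ℕ) : ℝ) ^ (n / 2)
                    = c ^ n * 2 ^ n * ((n + 1 : ℕ) : ℝ) ^ (n / 2) := rfl
                  _ ≤ c ^ n * 2 ^ n * (2 ^ n * ((h + 1 : ℕ) : ℝ) ^ (n / 2)) := this
            _ = c ^ n * (2 ^ n * (2 ^ n * ((h + 1 : ℕ) : ℝ) ^ (n / 2))) * (h ! : ℝ) := by ring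
      _ = (4 * c) ^ n * (((h + 1 : ℕ) : ℝ) ^ (n / 2) * (h ! : ℝ)) := by
          rw [mul_pow, h4n]; ring
      _ ≤ (4 * c) ^ n * (n ! : ℝ) := by
          apply mul_le_mul_of_nonneg_left hfact (by positivity)
      _ ≤ D ^ h * (n ! : ℝ) := by
          apply mul_le_mul_of_nonneg_right _ (by positivity)
          calc (4 * c) ^ n ≤ (4 * c + 1) ^ n := by
                apply pow_le_pow_left₀ (by positivity)
                linarith
            _ ≤ (4 * c + 1) ^ (2 * h) := by
                apply pow_le_pow_right₀ (by linarith)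
                exact h3
            _ = D ^ h := by rw [hD, ← pow_mul]
end Summ

lemma gS_ident (n m l : ℕ) :
    gSCount n m (2 * l + 1) = n.choose m * gSCount (n - m) 0 (2 * l) := by
  rw [gSCount_eq_invCount, gSCount_eq_invCount]
  exact invCount_eq n m l

end PSaux

open PSaux in
/-- The generalized Poisson generating function identity `P^S_{2l+1}(t;β) = P^S_{2l}(t;0)`:
`e^{−βt−t²/2} Σ_{n≥0} (t^n/n!) Σ_{m=0}^n β^m g^S_{n,m,2l+1}
  = e^{−t²/2} Σ_{n≥0} (t^n/n!) g^S_{n,0,2l}`. -/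
theorem PS_odd_eq_even (l : ℕ) (t β : ℝ) (hβ : 0 ≤ β) :
    Real.exp (-β * t - t ^ 2 / 2) *
      ∑' n : ℕ, (t ^ n / (Nat.factorial n : ℝ)) *
        ∑ m ∈ Finset.range (n + 1), β ^ m * (gSCount n m (2 * l + 1) : ℝ) =
    Real.exp (-t ^ 2 / 2) *
      ∑' n : ℕ, (t ^ n / (Nat.factorial n : ℝ)) * (gSCount n 0 (2 * l) : ℝ) := by
  classical
  have hb0 : ∀ k : ℕ, (0:ℝ) ≤ (gSCount k 0 (2 * l) : ℝ) := fun k => Nat.cast_nonneg _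
  have hS1 : Summable (fun k : ℕ => ‖(β * t) ^ k / (Nat.factorial k : ℝ)‖) := by
    have h := Real.summable_pow_div_factorial |β * t|
    refine h.congr fun k => ?_
    rw [Real.norm_eq_abs, abs_div, abs_pow, Nat.abs_cast]
  have hS2 : Summable (fun k : ℕ =>
      ‖t ^ k / (Nat.factorial k : ℝ) * (gSCount k 0 (2 * l) : ℝ)‖) := by
    apply Summable.of_nonneg_of_le (fun k => norm_nonneg _) _
      (majorant_summable |t| (abs_nonneg t))
    intro k
    rw [Real.norm_eq_abs, abs_mul, abs_div, abs_pow, Nat.abs_cast, abs_of_nonneg (hb0 k),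
      div_mul_eq_mul_div]
    gcongr
    exact_mod_cast gSCount_le k 0 (2 * l)
  have hprod := tsum_mul_tsum_eq_tsum_sum_range_of_summable_norm hS1 hS2
  have hexp : (∑' k : ℕ, (β * t) ^ k / (Nat.factorial k : ℝ)) = Real.exp (β * t) := by
    rw [Real.exp_eq_exp_ℝ, NormedSpace.exp_eq_tsum_div]
  have hterm : ∀ n : ℕ,
      (t ^ n / (Nat.factorial n : ℝ)) *
          ∑ m ∈ Finset.range (n + 1), β ^ m * (gSCount n m (2 * l + 1) : ℝ)
        = ∑ k ∈ Finset.range (n + 1), ((β * t) ^ k / (Nat.factorial k : ℝ)) *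
            (t ^ (n - k) / (Nat.factorial (n - k) : ℝ) * (gSCount (n - k) 0 (2 * l) : ℝ)) := by
    intro n
    rw [Finset.mul_sum]
    apply Finset.sum_congr rfl
    intro m hm
    have hmn : m ≤ n := Nat.lt_succ_iff.mp (Finset.mem_range.mp hm)
    have hgs : (gSCount n m (2 * l + 1) : ℝ)
        = (n.choose m : ℝ) * (gSCount (n - m) 0 (2 * l) : ℝ) := by
      rw [gS_ident n m l]; push_cast; ring
    have hC : (n.choose m : ℝ) = (Nat.factorial n : ℝ) /
        ((Nat.factorial m : ℝ) * (Nat.factorial (n - m) : ℝ)) := by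
      rw [Nat.cast_choose ℝ hmn]
    have hpow : t ^ n = t ^ m * t ^ (n - m) := by
      rw [← pow_add]; congr 1; omega
    have hm0 : (Nat.factorial m : ℝ) ≠ 0 := Nat.cast_ne_zero.mpr (Nat.factorial_ne_zero m)
    have hnm0 : (Nat.factorial (n - m) : ℝ) ≠ 0 := Nat.cast_ne_zero.mpr (Nat.factorial_ne_zero _)
    have hn0 : (Nat.factorial n : ℝ) ≠ 0 := Nat.cast_ne_zero.mpr (Nat.factorial_ne_zero n)
    rw [hgs, hC, hpow, mul_pow]
    field_simp
  calc Real.exp (-β * t - t ^ 2 / 2) *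
      ∑' n : ℕ, (t ^ n / (Nat.factorial n : ℝ)) *
        ∑ m ∈ Finset.range (n + 1), β ^ m * (gSCount n m (2 * l + 1) : ℝ)
      = Real.exp (-β * t - t ^ 2 / 2) *
          ∑' n : ℕ, ∑ k ∈ Finset.range (n + 1), ((β * t) ^ k / (Nat.factorial k : ℝ)) *
            (t ^ (n - k) / (Nat.factorial (n - k) : ℝ) * (gSCount (n - k) 0 (2 * l) : ℝ)) := by
        rw [tsum_congr hterm]
    _ = Real.exp (-β * t - t ^ 2 / 2) *
          ((∑' k : ℕ, (β * t) ^ k / (Nat.factorial k : ℝ)) *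
           (∑' k : ℕ, t ^ k / (Nat.factorial k : ℝ) * (gSCount k 0 (2 * l) : ℝ))) := by
        rw [← hprod]
    _ = (Real.exp (-β * t - t ^ 2 / 2) * Real.exp (β * t)) *
          ∑' k : ℕ, t ^ k / (Nat.factorial k : ℝ) * (gSCount k 0 (2 * l) : ℝ) := by
        rw [hexp]; ring
    _ = Real.exp (-t ^ 2 / 2) *
          ∑' k : ℕ, t ^ k / (Nat.factorial k : ℝ) * (gSCount k 0 (2 * l) : ℝ) := by
        rw [← Real.exp_add, show -β * t - t ^ 2 / 2 + β * t = -t ^ 2 / 2 by ring]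
end
end

section
/- Let n and l be positive integers, let V = ℂ^l, and let T_l : ℂ[S_n] → End(V^{⊗n}) be the algebra homomorphism extending T_l(π)(v₁⊗⋯⊗v_n) = v_{π(1)}⊗⋯⊗v_{π(n)}. Then: (a) if l ≥ n, T_l is injective on the group algebra ℂ[S_n]; (b) if l < n, then for every permutation π ∈ S_n and every subset S ⊆ {1,…,n} with |S| > l, one has T_l(π·E_S) = 0, where E_S = Σ_{σ} sgn(σ)·σ, the sum being over all permutations σ ∈ S_n fixing every element of the complement of S. -/
/-!
(a) If `f : ι ↪ κ`, evaluation at `e_{f 1} ⊗ ⋯ ⊗ e_{f n}` sends the basis element `π` of the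
group algebra to the basis tensor indexed by `f ∘ π`; distinct `π` give distinct basis tensors,
so `T` maps a basis to a linearly independent family and is injective.

(b) By multilinearity it suffices to show `T (π · E_S)` kills every basis tensor
`e_{f 1} ⊗ ⋯ ⊗ e_{f n}`. When `|S| > l`, pigeonhole gives `x ≠ y` in `S` with
`f (π x) = f (π y)`, and `σ ↦ (x y) σ` pairs the terms of `π · E_S` into pairs with equal
images and opposite signs.
-/

open scoped TensorProduct

noncomputable section

/-- `E_S`: the signed sum `Σ_σ sgn(σ)·σ` in the group algebra `ℂ[S_n]`, over all
permutations `σ` fixing every element outside `S`. -/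
def ES {n : ℕ} (S : Finset (Fin n)) : MonoidAlgebra ℂ (Equiv.Perm (Fin n)) :=
  ∑ σ ∈ Finset.univ.filter (fun σ : Equiv.Perm (Fin n) => ∀ x ∉ S, σ x = x),
    ((Equiv.Perm.sign σ : ℤ) : ℂ) • MonoidAlgebra.of ℂ (Equiv.Perm (Fin n)) σ

open Equiv Equiv.Perm PiTensorProduct

theorem Equiv.Perm.sum_sign_smul_eq_zero_of_swap_mul_mem {ι R N : Type*} [Fintype ι]
    [DecidableEq ι] [Ring R] [AddCommMonoid N] [Module R N] {F : Finset (Perm ι)} {x y : ι}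
    (hxy : x ≠ y) (hF : ∀ σ ∈ F, swap x y * σ ∈ F) (g : Perm ι → N)
    (hg : ∀ σ, g (swap x y * σ) = g σ) :
    ∑ σ ∈ F, ((sign σ : ℤ) : R) • g σ = 0 := by
  refine Finset.sum_involution (fun σ _ => swap x y * σ) (fun σ _ => ?_)
    (fun σ _ _ h => hxy (swap_eq_one_iff.mp (mul_eq_right.mp h))) hF
    (fun σ _ => swap_mul_self_mul x y σ)
  rw [hg, sign_mul, sign_swap hxy, ← add_smul]
  simp

namespace SchurWeyl

section Injective

variable {R ι κ : Type*} [CommRing R] [Fintype ι] [Fintype κ] [DecidableEq κ]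
  (T : MonoidAlgebra R (Perm ι) →ₗ[R] Module.End R (⨂[R] _ : ι, (κ → R)))
  (hT : ∀ (π : Perm ι) (v : ι → κ → R),
    T (MonoidAlgebra.of R (Perm ι) π) (tprod R v) = tprod R (fun i => v (π i)))
include hT

theorem injective_of_embedding (f : ι ↪ κ) : Function.Injective T := by
  set w : ⨂[R] _ : ι, (κ → R) := tprod R (fun i => Pi.single (f i) 1)
  set B := Basis.piTensorProduct (fun _ : ι => Pi.basisFun R κ)
  have hw : ⇑(LinearMap.applyₗ w ∘ₗ T) ∘ ⇑(MonoidAlgebra.basis (Perm ι) R) =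
      B ∘ fun π : Perm ι => f ∘ π :=
    funext fun π => by simp [w, B, ← MonoidAlgebra.of_apply, hT]
  refine Function.Injective.of_comp (f := LinearMap.applyₗ w) ?_
  refine LinearMap.injective_of_linearIndependent (f := LinearMap.applyₗ w ∘ₗ T)
    (MonoidAlgebra.basis _ R).span_eq ?_
  rw [hw]
  exact B.linearIndependent.comp _ fun π π' h => Equiv.ext fun i => f.injective (congrFun h i)

end Injective

section Antisymmetrizer

variable {n : ℕ} {κ : Type*}
  (T : MonoidAlgebra ℂ (Perm (Fin n)) →ₗ[ℂ] Module.End ℂ (⨂[ℂ] _ : Fin n, (κ → ℂ)))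
  (hT : ∀ (π : Perm (Fin n)) (v : Fin n → κ → ℂ),
    T (MonoidAlgebra.of ℂ (Perm (Fin n)) π) (tprod ℂ v) = tprod ℂ (fun i => v (π i)))
include hT

theorem of_mul_ES_apply_tprod (π : Perm (Fin n)) (S : Finset (Fin n)) (v : Fin n → κ → ℂ) :
    T (MonoidAlgebra.of ℂ _ π * ES S) (tprod ℂ v) =
      ∑ σ ∈ Finset.univ.filter (fun σ : Perm (Fin n) => ∀ z ∉ S, σ z = z),
        ((sign σ : ℤ) : ℂ) • tprod ℂ (fun i => v (π (σ i))) := by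
  rw [ES, Finset.mul_sum, map_sum, LinearMap.coe_sum, Finset.sum_apply]
  refine Finset.sum_congr rfl fun σ _ => ?_
  rw [mul_smul_comm, ← map_mul, map_smul, LinearMap.smul_apply, hT]
  rfl

theorem of_mul_ES_apply_tprod_eq_zero {π : Perm (Fin n)} {S : Finset (Fin n)}
    {v : Fin n → κ → ℂ} {x y : Fin n} (hx : x ∈ S) (hy : y ∈ S) (hxy : x ≠ y)
    (hv : v (π x) = v (π y)) :
    T (MonoidAlgebra.of ℂ _ π * ES S) (tprod ℂ v) = 0 := by
  have hswap : ∀ z, v (π (swap x y z)) = v (π z) := fun z => by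
    rw [swap_apply_def]
    split_ifs <;> simp_all
  rw [of_mul_ES_apply_tprod T hT]
  refine sum_sign_smul_eq_zero_of_swap_mul_mem hxy (fun σ hσ => ?_) _ fun σ => by
    simp only [Perm.mul_apply, hswap]
  simp only [Finset.mem_filter, Finset.mem_univ, true_and] at hσ ⊢
  intro z hz
  rw [Perm.mul_apply, hσ z hz, swap_apply_of_ne_of_ne (ne_of_mem_of_not_mem hx hz).symm
    (ne_of_mem_of_not_mem hy hz).symm]

theorem of_mul_ES_eq_zero [Fintype κ] (π : Perm (Fin n)) {S : Finset (Fin n)}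
    (hS : Fintype.card κ < S.card) : T (MonoidAlgebra.of ℂ _ π * ES S) = 0 := by
  refine PiTensorProduct.ext (Module.Basis.ext_multilinear (fun _ => Pi.basisFun ℂ κ) fun f => ?_)
  obtain ⟨x, hx, y, hy, hxy, hf⟩ := Finset.exists_ne_map_eq_of_card_lt_of_maps_to
    (t := Finset.univ) (by simpa using hS) (f := fun z => f (π z))
    (fun _ _ => Finset.mem_univ _)
  exact of_mul_ES_apply_tprod_eq_zero T hT hx hy hxy (by simp [hf])

end Antisymmetrizer

end SchurWeyl

theorem Tl_injective_and_kernel_general (n l : ℕ)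
    (T : MonoidAlgebra ℂ (Equiv.Perm (Fin n)) →ₗ[ℂ]
      Module.End ℂ (⨂[ℂ] _ : Fin n, (Fin l → ℂ)))
    (hT : ∀ (π : Equiv.Perm (Fin n)) (v : Fin n → (Fin l → ℂ)),
      T (MonoidAlgebra.of ℂ (Equiv.Perm (Fin n)) π) (PiTensorProduct.tprod ℂ v) =
        PiTensorProduct.tprod ℂ (fun i => v (π i))) :
    (l ≥ n → Function.Injective T) ∧
    (l < n → ∀ (π : Equiv.Perm (Fin n)) (S : Finset (Fin n)), l < S.card →
      T (MonoidAlgebra.of ℂ (Equiv.Perm (Fin n)) π * ES S) = 0) :=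
  ⟨fun hln => SchurWeyl.injective_of_embedding T hT (Fin.castLEEmb hln),
    fun _ π _ hS => SchurWeyl.of_mul_ES_eq_zero T hT π (by simpa using hS)⟩

/-- Let `T_l : ℂ[S_n] → End((ℂ^l)^{⊗n})` be the linear map with
`T_l(π)(v₁⊗⋯⊗v_n) = v_{π(1)}⊗⋯⊗v_{π(n)}`.  Then (a) if `l ≥ n`, `T_l` is injective;
(b) if `l < n`, then `T_l(π·E_S) = 0` for every `π ∈ S_n` and every `S` with `|S| > l`. -/
theorem Tl_injective_and_kernel (n l : ℕ) (hn : 0 < n) (hl : 0 < l)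
    (T : MonoidAlgebra ℂ (Equiv.Perm (Fin n)) →ₗ[ℂ]
      Module.End ℂ (⨂[ℂ] _ : Fin n, (Fin l → ℂ)))
    (hT : ∀ (π : Equiv.Perm (Fin n)) (v : Fin n → (Fin l → ℂ)),
      T (MonoidAlgebra.of ℂ (Equiv.Perm (Fin n)) π) (PiTensorProduct.tprod ℂ v) =
        PiTensorProduct.tprod ℂ (fun i => v (π i))) :
    (l ≥ n → Function.Injective T) ∧
    (l < n → ∀ (π : Equiv.Perm (Fin n)) (S : Finset (Fin n)), l < S.card →
      T (MonoidAlgebra.of ℂ (Equiv.Perm (Fin n)) π * ES S) = 0) :=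
  Tl_injective_and_kernel_general n l T hT
end
end
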